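/- Let T be a relative Rota-Baxter operator on an n-LieRep pair (g,ρ). For any X ∈ Λ^{n−1}g, the map δ_T(X): V → g defined by δ_T(X)(v) = Tρ(X)v − [X,Tv]_g is a 1-cocycle of the n-Lie algebra (V,[-,...,-]_T) with coefficients in the representation (g;ρ_T), i.e., ∂_T(δ_T(X)) = 0. -/

import Mathlib

/-- A map on `k`-tuples is multilinear (additive and homogeneous in each slot). -/
def MultiLinearOn (K : Type*) [Field K] {g h : Type*} [AddCommGroup g] [Module K g]
    [AddCommGroup h] [Module K h] {k : ℕ} (f : (Fin k → g) → h) : Prop :=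
  (∀ (x : Fin k → g) (i : Fin k) (a b : g),
      f (Function.update x i (a + b)) = f (Function.update x i a) + f (Function.update x i b)) ∧
  (∀ (x : Fin k → g) (i : Fin k) (c : K) (a : g),
      f (Function.update x i (c • a)) = c • f (Function.update x i a))

/-- A map on `k`-tuples is skew-symmetric. -/
def SkewOn {g h : Type*} [AddCommGroup h] {k : ℕ} (f : (Fin k → g) → h) : Prop :=
  ∀ (x : Fin k → g) (σ : Equiv.Perm (Fin k)), f (x ∘ σ) = (Equiv.Perm.sign σ : ℤ) • f x

/-- The Filippov (fundamental) identity for an `(m+2)`-ary bracket. -/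
def Filippov {g : Type*} [AddCommGroup g] {m : ℕ} (br : (Fin (m + 2) → g) → g) : Prop :=
  ∀ (x : Fin (m + 1) → g) (y : Fin (m + 2) → g),
    br (Fin.snoc x (br y)) =
      ∑ i : Fin (m + 2), br (Function.update y i (br (Fin.snoc x (y i))))

/-- `br` is an `n`-Lie algebra bracket (`n = m+2`): multilinear, skew-symmetric, Filippov. -/
def IsNLie (K : Type*) [Field K] {g : Type*} [AddCommGroup g] [Module K g] {m : ℕ}
    (br : (Fin (m + 2) → g) → g) : Prop :=
  MultiLinearOn K br ∧ SkewOn br ∧ Filippov br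

/-- `ρ` is a representation of the `(m+2)`-Lie algebra `(g, br)` on `V`. -/
def IsRep (K : Type*) [Field K] {g V : Type*} [AddCommGroup g] [Module K g]
    [AddCommGroup V] [Module K V] {m : ℕ} (br : (Fin (m + 2) → g) → g)
    (ρ : (Fin (m + 1) → g) → Module.End K V) : Prop :=
  MultiLinearOn K ρ ∧ SkewOn ρ ∧
  (∀ X Y : Fin (m + 1) → g,
      ρ X * ρ Y - ρ Y * ρ X =
        ∑ i : Fin (m + 1), ρ (Function.update Y i (br (Fin.snoc X (Y i))))) ∧
  (∀ (x : Fin m → g) (y : Fin (m + 2) → g),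
      ρ (Fin.snoc x (br y)) =
        ∑ i : Fin (m + 2), ((-1 : ℤ) ^ ((m + 1) - (i : ℕ))) •
          (ρ (fun j => y (i.succAbove j)) * ρ (Fin.snoc x (y i))))

/-- `T : V → g` is a relative Rota-Baxter operator on the `(m+2)`-LieRep pair `(g, br; ρ)`. -/
def IsRBO (K : Type*) [Field K] {g V : Type*} [AddCommGroup g] [Module K g]
    [AddCommGroup V] [Module K V] {m : ℕ} (br : (Fin (m + 2) → g) → g)
    (ρ : (Fin (m + 1) → g) → Module.End K V) (T : V →ₗ[K] g) : Prop :=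
  ∀ v : Fin (m + 2) → V,
    br (fun i => T (v i)) =
      ∑ i : Fin (m + 2), ((-1 : ℤ) ^ ((m + 1) - (i : ℕ))) •
        T (ρ (fun j => T (v (i.succAbove j))) (v i))

/-- The induced bracket `[u₁,...,uₙ]_T` on `V` of a relative Rota-Baxter operator. -/
def rbBracket (K : Type*) [Field K] {g V : Type*} [AddCommGroup g] [Module K g]
    [AddCommGroup V] [Module K V] {m : ℕ}
    (ρ : (Fin (m + 1) → g) → Module.End K V) (T : V →ₗ[K] g)
    (v : Fin (m + 2) → V) : V :=
  ∑ i : Fin (m + 2), ((-1 : ℤ) ^ ((m + 1) - (i : ℕ))) •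
    ρ (fun j => T (v (i.succAbove j))) (v i)

/-- The induced representation map `ρ_T` of `(V, [-,...,-]_T)` on `g`. -/
def rbRho (K : Type*) [Field K] {g V : Type*} [AddCommGroup g] [Module K g]
    [AddCommGroup V] [Module K V] {m : ℕ} (br : (Fin (m + 2) → g) → g)
    (ρ : (Fin (m + 1) → g) → Module.End K V) (T : V →ₗ[K] g)
    (u : Fin (m + 1) → V) (x : g) : g :=
  br (Fin.snoc (fun j => T (u j)) x) -
    ∑ i : Fin (m + 1), ((-1 : ℤ) ^ ((m + 1) - (i : ℕ))) •
      T (ρ (Fin.snoc (fun j : Fin m => T (u (i.succAbove j))) x) (u i))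

/-- The bracket `[x₁,...,xₙ]_C` induced by an `n`-pre-Lie product (`n = m+2`). -/
def preC (K : Type*) [Field K] {g : Type*} [AddCommGroup g] [Module K g] {m : ℕ}
    (p : (Fin (m + 1) → g) → g → g) (y : Fin (m + 2) → g) : g :=
  ∑ i : Fin (m + 2), ((-1 : ℤ) ^ ((m + 1) - (i : ℕ))) •
    p (fun j => y (i.succAbove j)) (y i)

/-- `p` is an `n`-pre-Lie algebra structure (`n = m+2`). -/
def IsNPreLie (K : Type*) [Field K] {g : Type*} [AddCommGroup g] [Module K g] {m : ℕ}
    (p : (Fin (m + 1) → g) → g → g) : Prop :=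
  (∀ z : g, MultiLinearOn K (fun x => p x z)) ∧
  (∀ (x : Fin (m + 1) → g) (a b : g), p x (a + b) = p x a + p x b) ∧
  (∀ (x : Fin (m + 1) → g) (c : K) (a : g), p x (c • a) = c • p x a) ∧
  (∀ z : g, SkewOn (fun x => p x z)) ∧
  (∀ (x y : Fin (m + 1) → g) (z : g),
      p x (p y z) =
        (∑ i : Fin (m + 1), p (Function.update y i (preC K p (Fin.snoc x (y i)))) z) +
          p y (p x z)) ∧
  (∀ (x : Fin m → g) (w : g) (y : Fin (m + 2) → g),
      p (Fin.cons (preC K p y) x) w =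
        ∑ i : Fin (m + 2), ((-1 : ℤ) ^ ((m + 1) - (i : ℕ))) •
          p (fun j => y (i.succAbove j)) (p (Fin.cons (y i) x) w))

section Aux
variable {g h' : Type*} [AddCommGroup h']

lemma skew_snoc_rot {k : ℕ} (f : (Fin (k+1) → g) → h') (hf : SkewOn f)
    (w : Fin (k+1) → g) (i : Fin (k+1)) :
    f (Fin.snoc (fun l => w (i.succAbove l)) (w i)) = ((-1:ℤ)^(k + (i:ℕ))) • f w := by
  have hcons : w ∘ ⇑(i.cycleRange).symm = Fin.cons (w i) (fun l => w (i.succAbove l)) := by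
    funext l
    refine Fin.cases ?_ ?_ l
    · simp
    · intro j; simp
  have hsnoc : (Fin.cons (w i) (fun l => w (i.succAbove l)) : Fin (k+1) → g) ∘ ⇑(finRotate (k+1))
      = Fin.snoc (fun l => w (i.succAbove l)) (w i) := by
    funext l
    refine Fin.lastCases ?_ ?_ l
    · simp [finRotate_last]
    · intro j
      simp [finRotate_succ_apply, Fin.coeSucc_eq_succ]
  have h1 := hf (w ∘ ⇑(i.cycleRange).symm) (finRotate (k+1))
  rw [hcons, hsnoc] at h1
  have h2 := hf w (i.cycleRange).symm
  rw [hcons] at h2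
  rw [h1, h2, Equiv.Perm.sign_symm, Fin.sign_cycleRange, sign_finRotate, smul_smul]
  norm_num
  rw [← pow_add]
end Aux
section Aux2
variable {K : Type*} [Field K] {g V h' : Type*} [AddCommGroup g] [Module K g]
  [AddCommGroup V] [Module K V] [AddCommGroup h'] [Module K h']

lemma negOnePow_congr {a b : ℕ} (h : a % 2 = b % 2) : ((-1:ℤ)^a) = (-1)^b := by
  rcases Nat.even_or_odd a with ha | ha
  · have hb : Even b := by rw [Nat.even_iff] at *; omega
    rw [ha.neg_one_pow, hb.neg_one_pow]
  · have hb : Odd b := by rw [Nat.odd_iff] at *; omega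
    rw [ha.neg_one_pow, hb.neg_one_pow]

lemma sign_cancel {M : Type*} [AddCommGroup M] (a b : ℕ) (x : M) (hb : b ≤ a) :
    ((-1:ℤ)^(a - b)) • ((-1:ℤ)^(a + b)) • x = x := by
  rw [smul_smul, ← pow_add]
  have h : (a - b) + (a + b) = 2 * a := by omega
  rw [h, pow_mul]
  norm_num

lemma val_succAbove' {n : ℕ} (p : Fin (n+1)) (q : Fin n) :
    ((p.succAbove q : Fin (n+1)) : ℕ) = if (q:ℕ) < (p:ℕ) then (q:ℕ) else (q:ℕ)+1 := by
  rcases lt_or_ge (Fin.castSucc q) p with h | h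
  · rw [Fin.succAbove_of_castSucc_lt _ _ h]
    have : (q:ℕ) < (p:ℕ) := h
    simp [this]
  · rw [Fin.succAbove_of_le_castSucc _ _ h]
    have : ¬ ((q:ℕ) < (p:ℕ)) := not_lt.mpr h
    simp [this]

set_option linter.unusedSectionVars false in
/-- Identity I: signed snoc-to-update for a skew map. -/
lemma skew_snoc_update {k : ℕ} (f : (Fin (k+1) → g) → h') (hf : SkewOn f)
    (w : Fin (k+1) → g) (i : Fin (k+1)) (z : g) :
    ((-1:ℤ)^(k - (i:ℕ))) • f (Fin.snoc (fun l => w (i.succAbove l)) z)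
      = f (Function.update w i z) := by
  have h1 := skew_snoc_rot f hf (Function.update w i z) i
  have h2 : (fun l => Function.update w i z (i.succAbove l)) = fun l => w (i.succAbove l) := by
    funext l
    exact Function.update_of_ne (Fin.succAbove_ne i l) _ _
  rw [h2, Function.update_self] at h1
  rw [h1]
  exact sign_cancel k (i:ℕ) _ (by omega)

/-- Evaluation of a multilinear End-valued map composed with a linear map is multilinear. -/
lemma ml_end_eval {k : ℕ} (ρ : (Fin k → g) → Module.End K V) (h : MultiLinearOn K ρ)
    (T : V →ₗ[K] g) (v : V) : MultiLinearOn K (fun Y => T ((ρ Y) v)) := by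
  constructor
  · intro x i a b
    show T ((ρ (Function.update x i (a + b))) v)
      = T ((ρ (Function.update x i a)) v) + T ((ρ (Function.update x i b)) v)
    rw [h.1 x i a b, LinearMap.add_apply, map_add]
  · intro x i c a
    show T ((ρ (Function.update x i (c • a))) v) = c • T ((ρ (Function.update x i a)) v)
    rw [h.2 x i c a, LinearMap.smul_apply, map_smul]

lemma skew_end_eval {k : ℕ} (ρ : (Fin k → g) → Module.End K V) (h : SkewOn ρ)
    (T : V →ₗ[K] g) (v : V) : SkewOn (fun Y => T ((ρ Y) v)) := by
  intro x σ
  show T ((ρ (x ∘ σ)) v) = ((Equiv.Perm.sign σ : ℤ)) • T ((ρ x) v)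
  rw [h x σ, LinearMap.smul_apply, map_zsmul]

/-- Multilinear maps are additive in the last (snoc) slot. -/
lemma ml_snoc_add {k : ℕ} (f : (Fin (k+1) → g) → h') (hf : MultiLinearOn K f)
    (c : Fin k → g) (a b : g) :
    f (Fin.snoc c (a + b)) = f (Fin.snoc c a) + f (Fin.snoc c b) := by
  have h1 := hf.1 (Fin.snoc c a) (Fin.last k) a b
  simpa only [Fin.update_snoc_last] using h1

lemma ml_snoc_sub {k : ℕ} (f : (Fin (k+1) → g) → h') (hf : MultiLinearOn K f)
    (c : Fin k → g) (a b : g) :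
    f (Fin.snoc c (a - b)) = f (Fin.snoc c a) - f (Fin.snoc c b) := by
  have hneg : f (Fin.snoc c (-b)) = - f (Fin.snoc c b) := by
    have h2 := hf.2 (Fin.snoc c b) (Fin.last k) (-1 : K) b
    simpa only [Fin.update_snoc_last, neg_one_smul] using h2
  rw [sub_eq_add_neg, ml_snoc_add f hf c a (-b), hneg, sub_eq_add_neg]

/-- The double-sum over ordered distinct pairs is symmetric. -/
lemma sum_pairs_swap {M : Type*} [AddCommGroup M] {m : ℕ} (F : Fin (m+2) → Fin (m+2) → M) :
    ∑ i : Fin (m+2), ∑ k : Fin (m+1), F i (i.succAbove k)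
      = ∑ i : Fin (m+2), ∑ k : Fin (m+1), F (i.succAbove k) i := by
  have h1 : ∀ (G : Fin (m+2) → Fin (m+2) → M) (i : Fin (m+2)),
      ∑ k : Fin (m+1), G i (i.succAbove k) = (∑ j : Fin (m+2), G i j) - G i i := by
    intro G i
    rw [Fin.sum_univ_succAbove (fun j => G i j) i]
    abel
  rw [Finset.sum_congr rfl (fun i _ => h1 F i),
    Finset.sum_congr rfl (fun i _ => h1 (fun a b => F b a) i),
    Finset.sum_sub_distrib, Finset.sum_sub_distrib, Finset.sum_comm]

/-- The key `succAbove` combinatorial lemma. -/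
lemma succAbove_pair {m : ℕ} (i : Fin (m+2)) (k : Fin (m+1)) :
    ∃ k' : Fin (m+1), (i.succAbove k).succAbove k' = i ∧
      (∀ l : Fin m, i.succAbove (k.succAbove l) = (i.succAbove k).succAbove (k'.succAbove l)) ∧
      ((m + 1 - (i:ℕ)) + (m + 1 - (k:ℕ)) + (m + (k':ℕ))) % 2
        = (m + 1 - ((i.succAbove k : Fin (m+2)):ℕ)) % 2 := by
  have hj := val_succAbove' i k
  have hi2 : (i:ℕ) < m+2 := i.isLt
  have hk1 : (k:ℕ) < m+1 := k.isLt
  rcases lt_or_ge (k:ℕ) (i:ℕ) with hcase | hcase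
  · rw [if_pos hcase] at hj
    refine ⟨⟨(i:ℕ)-1, by omega⟩, ?_, ?_, ?_⟩
    · apply Fin.ext
      simp only [val_succAbove', Fin.val_mk]
      split_ifs <;> omega
    · intro l
      apply Fin.ext
      simp only [val_succAbove', Fin.val_mk]
      split_ifs <;> omega
    · simp only []
      omega
  · rw [if_neg (not_lt.mpr hcase)] at hj
    have him : (i:ℕ) < m+1 := by omega
    refine ⟨⟨(i:ℕ), him⟩, ?_, ?_, ?_⟩
    · apply Fin.ext
      simp only [val_succAbove', Fin.val_mk]
      split_ifs <;> omega
    · intro l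
      apply Fin.ext
      simp only [val_succAbove', Fin.val_mk]
      split_ifs <;> omega
    · simp only []
      omega

end Aux2
section Aux3
variable {K : Type*} [Field K] {g V : Type*} [AddCommGroup g] [Module K g]
  [AddCommGroup V] [Module K V] {m : ℕ}

lemma rbRho_expand (br : (Fin (m + 2) → g) → g) (ρ : (Fin (m + 1) → g) → Module.End K V)
    (T : V →ₗ[K] g) (u : Fin (m+2) → V) (i : Fin (m+2)) (x : g) :
    rbRho K br ρ T (fun j => u (i.succAbove j)) x
      = br (Fin.snoc (fun l => T (u (i.succAbove l))) x)
        - ∑ k : Fin (m+1), ((-1:ℤ)^((m+1) - (k:ℕ))) •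
            T ((ρ (Fin.snoc (fun l : Fin m => T (u (i.succAbove (k.succAbove l)))) x))
              (u (i.succAbove k))) := rfl

lemma rbRho_sub {br : (Fin (m + 2) → g) → g} {ρ : (Fin (m + 1) → g) → Module.End K V}
    (T : V →ₗ[K] g) (hbrML : MultiLinearOn K br) (hρML : MultiLinearOn K ρ)
    (u' : Fin (m+1) → V) (a b : g) :
    rbRho K br ρ T u' (a - b) = rbRho K br ρ T u' a - rbRho K br ρ T u' b := by
  simp only [rbRho]
  rw [ml_snoc_sub br hbrML]
  have h2 : ∀ k : Fin (m+1),
      T ((ρ (Fin.snoc (fun l : Fin m => T (u' (k.succAbove l))) (a - b))) (u' k))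
        = T ((ρ (Fin.snoc (fun l : Fin m => T (u' (k.succAbove l))) a)) (u' k))
          - T ((ρ (Fin.snoc (fun l : Fin m => T (u' (k.succAbove l))) b)) (u' k)) :=
    fun k => ml_snoc_sub _ (ml_end_eval ρ hρML T (u' k)) _ a b
  rw [Finset.sum_congr rfl (fun k _ => by rw [h2 k, smul_sub]), Finset.sum_sub_distrib]
  abel

lemma T_rbBracket {br : (Fin (m + 2) → g) → g} {ρ : (Fin (m + 1) → g) → Module.End K V}
    {T : V →ₗ[K] g} (hT : IsRBO K br ρ T) (u : Fin (m+2) → V) :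
    T (rbBracket K ρ T u) = br (fun a => T (u a)) := by
  rw [hT u, rbBracket, map_sum]
  refine Finset.sum_congr rfl (fun i _ => ?_)
  rw [map_zsmul]

end Aux3
section Aux4
variable {K : Type*} [Field K] {g V : Type*} [AddCommGroup g] [Module K g]
  [AddCommGroup V] [Module K V] {m : ℕ}

/-- Termwise sign-shuffle identity (P45): move the distinguished slot around. -/
lemma P45 {ρ : (Fin (m + 1) → g) → Module.End K V} (hρSkew : SkewOn ρ)
    (T : V →ₗ[K] g) (u : Fin (m+2) → V) (zf : Fin (m+2) → g) :
    ∑ i : Fin (m+2), ((-1:ℤ)^((m+1) - (i:ℕ))) •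
      ∑ k : Fin (m+1), ((-1:ℤ)^((m+1) - (k:ℕ))) •
        T ((ρ (Fin.snoc (fun l : Fin m => T (u (i.succAbove (k.succAbove l)))) (zf i)))
          (u (i.succAbove k)))
    = ∑ i : Fin (m+2), ∑ k : Fin (m+1), ((-1:ℤ)^((m+1) - (((i.succAbove k) : Fin (m+2)):ℕ))) •
        T ((ρ (fun l => Function.update (fun a => T (u a)) i (zf i) ((i.succAbove k).succAbove l)))
          (u (i.succAbove k))) := by
  refine Finset.sum_congr rfl (fun i _ => ?_)
  rw [Finset.smul_sum]
  refine Finset.sum_congr rfl (fun k _ => ?_)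
  obtain ⟨k', hk1, hk2, hk3⟩ := succAbove_pair i k
  set Y : Fin (m+1) → g :=
    fun l => Function.update (fun a => T (u a)) i (zf i) ((i.succAbove k).succAbove l) with hY
  have hY1 : Y k' = zf i := by
    rw [hY]; simp only; rw [hk1, Function.update_self]
  have hY2 : (fun l : Fin m => Y (k'.succAbove l))
      = fun l => T (u (i.succAbove (k.succAbove l))) := by
    funext l
    show Function.update (fun a => T (u a)) i (zf i) ((i.succAbove k).succAbove (k'.succAbove l))
      = _
    rw [← hk2 l, Function.update_of_ne (Fin.succAbove_ne i (k.succAbove l))]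
  have hrot := skew_snoc_rot (fun Y' => T ((ρ Y') (u (i.succAbove k))))
    (skew_end_eval ρ hρSkew T (u (i.succAbove k))) Y k'
  rw [hY2, hY1] at hrot
  rw [hrot, smul_smul, smul_smul, ← pow_add, ← pow_add, negOnePow_congr hk3]

/-- RBO expansion of the bracket of an updated tuple. -/
lemma RBO_update {br : (Fin (m + 2) → g) → g} {ρ : (Fin (m + 1) → g) → Module.End K V}
    {T : V →ₗ[K] g} (hT : IsRBO K br ρ T) (u : Fin (m+2) → V) (i : Fin (m+2)) (vv : V) :
    br (Function.update (fun a => T (u a)) i (T vv))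
      = ((-1:ℤ)^((m+1) - (i:ℕ))) • T ((ρ (fun l => T (u (i.succAbove l)))) vv)
        + ∑ k : Fin (m+1), ((-1:ℤ)^((m+1) - (((i.succAbove k) : Fin (m+2)):ℕ))) •
            T ((ρ (fun l => Function.update (fun a => T (u a)) i (T vv)
                ((i.succAbove k).succAbove l))) (u (i.succAbove k))) := by
  have hv : (fun a => T (Function.update u i vv a))
      = Function.update (fun a => T (u a)) i (T vv) := by
    funext a
    rcases eq_or_ne a i with rfl | h
    · rw [Function.update_self, Function.update_self]
    · rw [Function.update_of_ne h, Function.update_of_ne h]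
  have h0 := hT (Function.update u i vv)
  rw [hv] at h0
  rw [h0, Fin.sum_univ_succAbove _ i]
  congr 1
  · have t1 : (fun l : Fin (m+1) => T (Function.update u i vv (i.succAbove l)))
        = fun l => T (u (i.succAbove l)) :=
      funext fun l => by rw [Function.update_of_ne (Fin.succAbove_ne i l)]
    rw [Function.update_self, t1]
  · refine Finset.sum_congr rfl (fun k _ => ?_)
    have t2 : (fun l : Fin (m+1) => T (Function.update u i vv ((i.succAbove k).succAbove l)))
        = fun l => Function.update (fun a => T (u a)) i (T vv) ((i.succAbove k).succAbove l) :=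
      funext fun l => congrFun hv _
    rw [t2, Function.update_of_ne (Fin.succAbove_ne i k)]

/-- The commutator identity, pushed through `T` and evaluated. -/
lemma comm_step {br : (Fin (m + 2) → g) → g} {ρ : (Fin (m + 1) → g) → Module.End K V}
    (hρComm : ∀ X Y : Fin (m + 1) → g,
      ρ X * ρ Y - ρ Y * ρ X =
        ∑ k : Fin (m + 1), ρ (Function.update Y k (br (Fin.snoc X (Y k)))))
    (T : V →ₗ[K] g) (u : Fin (m+2) → V) (X : Fin (m+1) → g) (i : Fin (m+2)) :
    T ((ρ X) ((ρ (fun l => T (u (i.succAbove l)))) (u i)))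
      = T ((ρ (fun l => T (u (i.succAbove l)))) ((ρ X) (u i)))
        + ∑ k : Fin (m+1), T ((ρ (fun l => Function.update (fun a => T (u a)) (i.succAbove k)
            (br (Fin.snoc X (T (u (i.succAbove k))))) (i.succAbove l))) (u i)) := by
  have h0 := congrArg (fun E : Module.End K V => T (E (u i)))
    (hρComm X (fun l => T (u (i.succAbove l))))
  simp only [LinearMap.sub_apply, Module.End.mul_apply, LinearMap.coe_sum,
    Finset.sum_apply, map_sub, map_sum] at h0
  have hupd : ∀ k : Fin (m+1),
      Function.update (fun l => T (u (i.succAbove l))) k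
          (br (Fin.snoc X (T (u (i.succAbove k)))))
        = fun l => Function.update (fun a => T (u a)) (i.succAbove k)
            (br (Fin.snoc X (T (u (i.succAbove k))))) (i.succAbove l) := by
    intro k; funext l
    rcases eq_or_ne l k with rfl | h
    · rw [Function.update_self, Function.update_self]
    · rw [Function.update_of_ne h,
        Function.update_of_ne (fun hc => h (Fin.succAbove_right_injective hc))]
  simp only [hupd] at h0
  rw [sub_eq_iff_eq_add'] at h0
  rw [h0]

end Aux4
/-- Let `T` be a relative Rota-Baxter operator on an `n`-LieRep pair `(g, ρ)`
(`n = m+2`).  For any `X ∈ Λ^{n-1} g`, the map `δ_T(X) : V → g`,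
`δ_T(X)(v) = T(ρ(X)v) - [X, Tv]_g`, is a 1-cocycle of the `n`-Lie algebra `(V, [-,...,-]_T)`
with coefficients in `(g; ρ_T)`:
`Σᵢ (-1)^{n-i} ρ_T(u₁,...,ûᵢ,...,uₙ)(δ_T(X)(uᵢ)) - δ_T(X)([u₁,...,uₙ]_T) = 0`. -/
theorem delta_T_is_one_cocycle {K : Type*} [Field K] {g V : Type*}
    [AddCommGroup g] [Module K g] [AddCommGroup V] [Module K V] {m : ℕ}
    (br : (Fin (m + 2) → g) → g) (ρ : (Fin (m + 1) → g) → Module.End K V)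
    (T : V →ₗ[K] g) (hg : IsNLie K br) (hρ : IsRep K br ρ) (hT : IsRBO K br ρ T)
    (X : Fin (m + 1) → g) :
    ∀ u : Fin (m + 2) → V,
      (∑ i : Fin (m + 2), ((-1 : ℤ) ^ ((m + 1) - (i : ℕ))) •
          rbRho K br ρ T (fun j => u (i.succAbove j))
            (T (ρ X (u i)) - br (Fin.snoc X (T (u i))))) -
        (T (ρ X (rbBracket K ρ T u)) - br (Fin.snoc X (T (rbBracket K ρ T u)))) = 0 := by

  obtain ⟨hbrML, hbrSkew, hbrFil⟩ := hg
  obtain ⟨hρML, hρSkew, hρComm, -⟩ := hρ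
  intro u
  -- Step 0: split the argument of `rbRho` using linearity.
  have hsub : ∀ i : Fin (m+2),
      rbRho K br ρ T (fun j => u (i.succAbove j))
          (T ((ρ X) (u i)) - br (Fin.snoc X (T (u i))))
        = rbRho K br ρ T (fun j => u (i.succAbove j)) (T ((ρ X) (u i)))
          - rbRho K br ρ T (fun j => u (i.succAbove j)) (br (Fin.snoc X (T (u i)))) :=
    fun i => rbRho_sub T hbrML hρML _ _ _
  simp only [hsub, smul_sub]
  rw [Finset.sum_sub_distrib]
  -- Step 1: expansion of each `rbRho` term.
  have e1 : ∀ z : Fin (m+2) → g, ∀ i : Fin (m+2), ((-1:ℤ)^((m+1) - (i:ℕ))) •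
      rbRho K br ρ T (fun j => u (i.succAbove j)) (z i)
      = br (Function.update (fun a => T (u a)) i (z i))
        - ((-1:ℤ)^((m+1) - (i:ℕ))) • ∑ k : Fin (m+1), ((-1:ℤ)^((m+1) - (k:ℕ))) •
            T ((ρ (Fin.snoc (fun l : Fin m => T (u (i.succAbove (k.succAbove l)))) (z i)))
              (u (i.succAbove k))) := by
    intro z i
    rw [rbRho_expand, smul_sub]
    have e := skew_snoc_update br hbrSkew (fun a => T (u a)) i (z i)
    rw [e]
  -- Step 2: the Z-part.
  have hSZ : (∑ i : Fin (m+2), ((-1:ℤ)^((m+1) - (i:ℕ))) •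
        rbRho K br ρ T (fun j => u (i.succAbove j)) (T ((ρ X) (u i))))
      = ∑ i : Fin (m+2), ((-1:ℤ)^((m+1) - (i:ℕ))) •
          T ((ρ (fun l => T (u (i.succAbove l)))) ((ρ X) (u i))) := by
    have p45 := P45 hρSkew T u (fun a => T ((ρ X) (u a)))
    have e1' := e1 (fun a => T ((ρ X) (u a)))
    simp only [e1']
    rw [Finset.sum_sub_distrib, p45]
    have rbo : ∀ i : Fin (m+2),
        br (Function.update (fun a => T (u a)) i (T ((ρ X) (u i))))
          = ((-1:ℤ)^((m+1) - (i:ℕ))) • T ((ρ (fun l => T (u (i.succAbove l)))) ((ρ X) (u i)))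
            + ∑ k : Fin (m+1), ((-1:ℤ)^((m+1) - (((i.succAbove k) : Fin (m+2)):ℕ))) •
                T ((ρ (fun l => Function.update (fun a => T (u a)) i (T ((ρ X) (u i)))
                    ((i.succAbove k).succAbove l))) (u (i.succAbove k))) :=
      fun i => RBO_update hT u i ((ρ X) (u i))
    simp only [rbo]
    rw [Finset.sum_add_distrib]
    abel
  -- Step 3: the Q-part.
  have hSQ : (∑ i : Fin (m+2), ((-1:ℤ)^((m+1) - (i:ℕ))) •
        rbRho K br ρ T (fun j => u (i.succAbove j)) (br (Fin.snoc X (T (u i)))))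
      = br (Fin.snoc X (br (fun a => T (u a))))
        - ∑ i : Fin (m+2), ∑ k : Fin (m+1),
            ((-1:ℤ)^((m+1) - (((i.succAbove k) : Fin (m+2)):ℕ))) •
              T ((ρ (fun l => Function.update (fun a => T (u a)) i
                  (br (Fin.snoc X (T (u i)))) ((i.succAbove k).succAbove l)))
                (u (i.succAbove k))) := by
    have p45 := P45 hρSkew T u (fun a => br (Fin.snoc X (T (u a))))
    have e1' := e1 (fun a => br (Fin.snoc X (T (u a))))
    simp only [e1']
    rw [Finset.sum_sub_distrib, p45]
    have hfil := hbrFil X (fun a => T (u a))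
    rw [← hfil]
  -- Step 4: the `T (ρ X (rbBracket u))` term.
  have hTB1 : T ((ρ X) (rbBracket K ρ T u))
      = (∑ i : Fin (m+2), ((-1:ℤ)^((m+1) - (i:ℕ))) •
          T ((ρ (fun l => T (u (i.succAbove l)))) ((ρ X) (u i))))
        + ∑ i : Fin (m+2), ∑ k : Fin (m+1), ((-1:ℤ)^((m+1) - (i:ℕ))) •
            T ((ρ (fun l => Function.update (fun a => T (u a)) (i.succAbove k)
                (br (Fin.snoc X (T (u (i.succAbove k))))) (i.succAbove l))) (u i)) := by
    have h1 : T ((ρ X) (rbBracket K ρ T u))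
        = ∑ i : Fin (m+2), ((-1:ℤ)^((m+1) - (i:ℕ))) •
            T ((ρ X) ((ρ (fun l => T (u (i.succAbove l)))) (u i))) := by
      rw [show rbBracket K ρ T u = ∑ i : Fin (m+2), ((-1:ℤ)^((m+1) - (i:ℕ))) •
          (ρ (fun l => T (u (i.succAbove l)))) (u i) from rfl, map_sum, map_sum]
      exact Finset.sum_congr rfl (fun i _ => by rw [map_zsmul, map_zsmul])
    rw [h1]
    have hcs := comm_step hρComm T u X
    simp only [hcs, smul_add, Finset.smul_sum]
    rw [Finset.sum_add_distrib]
  -- Step 5: the last bracket term.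
  have hTB3 : br (Fin.snoc X (T (rbBracket K ρ T u)))
      = br (Fin.snoc X (br (fun a => T (u a)))) := by
    rw [T_rbBracket hT u]
  rw [hSZ, hSQ, hTB1, hTB3]
  -- Step 6: swap the double sums and finish.
  have hswap := sum_pairs_swap (fun a b => ((-1:ℤ)^((m+1) - (b:ℕ))) •
    T ((ρ (fun l => Function.update (fun c => T (u c)) a
        (br (Fin.snoc X (T (u a)))) (b.succAbove l))) (u b)))
  rw [hswap]
  abel
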